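/- Let μ_T be the pushforward under the conjugacy ω : F^ℤ → A_T of the uniform Bernoulli measure on F^ℤ. Then there exists a constant C > 0 such that for every Borel set A ⊆ K², μ_T(A) ≤ C·diam(A)^α, where α = 1 + 1/(1 + log_q(1/|a|)) and diam is with respect to the max norm on K². -/

import Mathlib

open scoped Classical
open MeasureTheory Filter

noncomputable section

/-- A complete, locally compact non-Archimedean field with residue field of
order `q`, absolute value normalized so that a uniformizer has norm `1/q`.
`reps` is a set of `q` coset representatives for the residue field: they cover
the ring of integers by discs of radius `1/q` and are pairwise at distance
`> 1/q`. -/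
structure NAField (K : Type*) [NormedField K] where
  na : IsNonarchimedean (fun x : K => ‖x‖)
  complete : CompleteSpace K
  locCompact : LocallyCompactSpace K
  q : ℕ
  one_lt_q : 1 < q
  valGroup : ∀ x : K, x ≠ 0 → ∃ n : ℤ, ‖x‖ = (q : ℝ) ^ n
  exists_unif : ∃ ϖ : K, ‖ϖ‖ = (q : ℝ)⁻¹
  reps : Finset K
  card_reps : reps.card = q
  norm_reps : ∀ s ∈ reps, ‖s‖ ≤ 1
  reps_cover : ∀ x : K, ‖x‖ ≤ 1 → ∃ s ∈ reps, ‖x - s‖ ≤ (q : ℝ)⁻¹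
  reps_sep : ∀ s ∈ reps, ∀ t ∈ reps, s ≠ t → (q : ℝ)⁻¹ < ‖s - t‖

variable {K : Type*} [NormedField K]

/-- `f : R → R` is `(1/q)`-Lipschitz on the ring of integers. -/
def NAField.IsLip (F : NAField K) (f : K → K) : Prop :=
  (∀ t : K, ‖t‖ ≤ 1 → ‖f t‖ ≤ 1) ∧
  ∀ t₁ t₂ : K, ‖t₁‖ ≤ 1 → ‖t₂‖ ≤ 1 → ‖f t₁ - f t₂‖ ≤ ((F.q : ℝ))⁻¹ * ‖t₁ - t₂‖

/-- The unit polydisc `R² ⊆ K²`. -/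
def unitPoly (K : Type*) [NormedField K] : Set (K × K) := {p | ‖p.1‖ ≤ 1 ∧ ‖p.2‖ ≤ 1}

/-- Horizontal `δ`-neighborhood `H_δ(f) = {(t, f t + θ) : t ∈ R, |θ| ≤ δ}`. -/
def Hnbhd (f : K → K) (δ : ℝ) : Set (K × K) :=
  {p | ∃ t θ : K, ‖t‖ ≤ 1 ∧ ‖θ‖ ≤ δ ∧ p = (t, f t + θ)}

/-- Vertical `δ`-neighborhood `V_δ(f) = {(f t + θ, t) : t ∈ R, |θ| ≤ δ}`. -/
def Vnbhd (f : K → K) (δ : ℝ) : Set (K × K) :=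
  {p | ∃ t θ : K, ‖t‖ ≤ 1 ∧ ‖θ‖ ≤ δ ∧ p = (f t + θ, t)}

/-- The automorphism `T(x,y) = (a y + b (x^q - x), x)`. -/
def NAField.Tmap (F : NAField K) (a b : K) : K × K → K × K :=
  fun p => (a * p.2 + b * (p.1 ^ F.q - p.1), p.1)

/-- The inverse automorphism `T⁻¹(x,y) = (y, a⁻¹ (x - b (y^q - y)))`. -/
def NAField.Tinv (F : NAField K) (a b : K) : K × K → K × K :=
  fun p => (p.2, a⁻¹ * (p.1 - b * (p.2 ^ F.q - p.2)))

/-- The attractor `A_T = ⋂_{n ≥ 1} Tⁿ(R²)`. -/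
def NAField.Attractor (F : NAField K) (a b : K) : Set (K × K) :=
  ⋂ n ∈ {n : ℕ | 1 ≤ n}, (F.Tmap a b)^[n] '' unitPoly K

/-- The basin of attraction `B_T = ⋃_{n ≥ 1} T⁻ⁿ(R²)`. -/
def NAField.Basin (F : NAField K) (a b : K) : Set (K × K) :=
  ⋃ n ∈ {n : ℕ | 1 ≤ n}, (F.Tmap a b)^[n] ⁻¹' unitPoly K

/-- `T^k` for `k : ℤ`. -/
def NAField.iterZ (F : NAField K) (a b : K) (k : ℤ) : K × K → K × K :=
  if 0 ≤ k then (F.Tmap a b)^[k.toNat] else (F.Tinv a b)^[(-k).toNat]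

/-- The image under the conjugacy `ω` of the cylinder set of bisequences
agreeing with `s` on coordinates `-M, …, M`: points of the attractor whose
itinerary through the residue strips matches `s` on those coordinates. -/
def NAField.Cyl (F : NAField K) (a b : K) (s : ℤ → K) (M : ℕ) : Set (K × K) :=
  {p | p ∈ F.Attractor a b ∧
    ∀ k : ℤ, |k| ≤ (M : ℤ) → ‖(F.iterZ a b k p).1 - s k‖ ≤ ((F.q : ℝ))⁻¹}

/-!
Write `‖a‖ = q⁻ᵛ`. Fermat's little theorem in the residue field makes `x ↦ b (x^q - x)` map the ring
of integers into itself and, together with `‖x^q - y^q‖ ≤ ‖x - y‖`, be `q`-Lipschitz there. The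
first coordinates of an orbit in the attractor satisfy `x_{k+1} = a x_{k-1} + b (x_k^q - x_k)`, so
two such orbits separate by a factor at most `q` per step forward and `q / ‖a‖ = q^(v+1)` per step
backward. Hence if `diam A ≤ q^-(m+1)`, all points of `A ∩ A_T` share their itinerary at the times
`-⌊m/(v+1)⌋, …, m`, and these points lie in `q^(m - ⌊m/(v+1)⌋)` cylinders of length `2m+1`, of
total mass `q^-(m + ⌊m/(v+1)⌋ + 1) ≤ q · (q^-(m+1))^α`. The complement of `A_T` is null because the
`q` cylinders of length one already carry full mass.
-/

open scoped ENNReal Topology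

lemma IsNonarchimedean.norm_sub_le_max {E : Type*} [SeminormedAddGroup E]
    (hna : IsNonarchimedean (‖·‖ : E → ℝ)) (x y : E) : ‖x - y‖ ≤ max ‖x‖ ‖y‖ := by
  simpa [sub_eq_add_neg] using hna x (-y)

lemma IsNonarchimedean.norm_pow_sub_pow_le {R : Type*} [SeminormedRing R] [NormOneClass R]
    (hna : IsNonarchimedean (‖·‖ : R → ℝ)) {s t : R} (hs : ‖s‖ ≤ 1) (ht : ‖t‖ ≤ 1) (n : ℕ) :
    ‖s ^ n - t ^ n‖ ≤ ‖s - t‖ := by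
  induction n with
  | zero => simp
  | succ n ih =>
    have hsn : ‖s ^ n‖ ≤ 1 := (norm_pow_le s n).trans (pow_le_one₀ (norm_nonneg s) hs)
    rw [show s ^ (n + 1) - t ^ (n + 1) = s ^ n * (s - t) + (s ^ n - t ^ n) * t by
      rw [pow_succ, pow_succ]; noncomm_ring]
    refine (hna _ _).trans (max_le ?_ ?_)
    · exact (norm_mul_le _ _).trans (mul_le_of_le_one_left (norm_nonneg _) hsn)
    · exact (norm_mul_le _ _).trans (mul_le_of_le_one_right (norm_nonneg _) ht |>.trans ih)

lemma max_le_pow_mul_of_le_mul_max {u : ℤ → ℝ} {c : ℝ} (hc : 1 ≤ c)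
    (hu : ∀ k, 0 ≤ u k) (h : ∀ k, u (k + 1) ≤ c * max (u (k - 1)) (u k)) (n : ℕ) :
    max (u n) (u (n - 1)) ≤ c ^ n * max (u 0) (u (-1)) := by
  induction n with
  | zero => simp
  | succ n ih =>
    push_cast
    rw [add_sub_cancel_right, pow_succ', mul_assoc]
    refine max_le ((h n).trans ?_) ((le_max_left _ _).trans ih |>.trans ?_)
    · exact mul_le_mul_of_nonneg_left (max_comm (u n) _ ▸ ih) (by linarith)
    · exact le_mul_of_one_le_left
        (mul_nonneg (pow_nonneg (zero_le_one.trans hc) _) (le_max_of_le_left (hu 0))) hc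

theorem ENNReal.le_mul_inv_rpow_mul_rpow_of_forall_le_pow {x c d ε : ℝ≥0∞} {α : ℝ}
    (hε₀ : ε ≠ 0) (hε₁ : ε < 1) (hc : c ≠ ∞) (hα : 0 < α) (hx : x ≤ c)
    (h : ∀ n : ℕ, d ≤ ε ^ (n + 1) → x ≤ c * (ε ^ (n + 1)) ^ α) :
    x ≤ c * ε⁻¹ ^ α * d ^ α := by
  rcases eq_zero_or_pos d with rfl | hd
  · have hlim : Tendsto (fun n : ℕ => c * (ε ^ α) ^ (n + 1)) atTop (𝓝 (c * 0)) :=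
      ENNReal.Tendsto.const_mul ((ENNReal.tendsto_pow_atTop_nhds_zero_of_lt_one
        (ENNReal.rpow_lt_one hε₁ hα)).comp (tendsto_add_atTop_nat 1)) (Or.inr hc)
    have : x ≤ 0 := by
      refine ge_of_tendsto (by simpa using hlim) (Eventually.of_forall fun n => ?_)
      simpa [← ENNReal.rpow_natCast, ← ENNReal.rpow_mul, mul_comm] using h n zero_le
    simp [nonpos_iff_eq_zero.mp this]
  have hex : ∃ n : ℕ, ε ^ (n + 1) < d :=
    ((ENNReal.tendsto_pow_atTop_nhds_zero_of_lt_one hε₁).eventually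
      (gt_mem_nhds hd)).exists_forall_of_atTop.imp fun n hn => hn (n + 1) n.le_succ
  obtain ⟨j, hxj, hjd⟩ : ∃ j : ℕ, x ≤ c * (ε ^ j) ^ α ∧ ε ^ (j + 1) < d := by
    rcases hn : Nat.find hex with _ | n
    · exact ⟨0, by simpa using hx, hn ▸ Nat.find_spec hex⟩
    · refine ⟨n + 1, h n (not_lt.mp ?_), hn ▸ Nat.find_spec hex⟩
      exact Nat.find_min hex (hn ▸ n.lt_succ_self)
  have hstep : ε⁻¹ ^ α * (ε ^ (j + 1)) ^ α = (ε ^ j) ^ α := by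
    rw [← ENNReal.mul_rpow_of_nonneg _ _ hα.le, pow_succ', ← mul_assoc,
      ENNReal.inv_mul_cancel hε₀ (hε₁.trans ENNReal.one_lt_top).ne, one_mul]
  calc x ≤ c * (ε ^ j) ^ α := hxj
    _ = c * ε⁻¹ ^ α * (ε ^ (j + 1)) ^ α := by rw [mul_assoc, hstep]
    _ ≤ c * ε⁻¹ ^ α * d ^ α := by gcongr

lemma ENNReal.pow_le_inv_mul_rpow {ε : ℝ≥0∞} (hε₀ : ε ≠ 0) (hε₁ : ε ≤ 1) (m v : ℕ) :
    ε ^ (m + m / (v + 1) + 1) ≤ ε⁻¹ * (ε ^ (m + 1)) ^ (1 + 1 / ((v : ℝ) + 1)) := by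
  have hε : ε ≠ ∞ := ne_top_of_le_ne_top ENNReal.one_ne_top hε₁
  rw [← ENNReal.rpow_neg_one, ← ENNReal.rpow_natCast, ← ENNReal.rpow_natCast ε (m + 1),
    ← ENNReal.rpow_mul, ← ENNReal.rpow_add _ _ hε₀ hε]
  refine ENNReal.rpow_le_rpow_of_exponent_ge hε₁ ?_
  have hm : ((m : ℝ) + 1) / (v + 1) ≤ (m / (v + 1) : ℕ) + 1 := by
    rw [div_le_iff₀ (by positivity)]
    exact_mod_cast Nat.succ_le_of_lt ((Nat.lt_mul_div_succ m v.succ_pos).trans_eq (mul_comm _ _))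
  push_cast
  calc -1 + ((m : ℝ) + 1) * (1 + 1 / ((v : ℝ) + 1)) = m + ((m : ℝ) + 1) / (v + 1) := by ring
    _ ≤ _ := by linarith

namespace NAField

variable (F : NAField K)

lemma one_lt_q_real : (1 : ℝ) < F.q := by exact_mod_cast F.one_lt_q

lemma q_pos : (0 : ℝ) < F.q := one_pos.trans F.one_lt_q_real

lemma norm_eq_one_of_inv_q_lt_norm {x : K} (hx : ‖x‖ ≤ 1) (hx' : (F.q : ℝ)⁻¹ < ‖x‖) :
    ‖x‖ = 1 := by
  obtain ⟨n, hn⟩ := F.valGroup x (by rintro rfl; exact (inv_pos.2 F.q_pos).not_gt (by simp_all))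
  rw [hn, ← zpow_neg_one, zpow_lt_zpow_iff_right₀ F.one_lt_q_real] at hx'
  rw [hn, ← zpow_zero (F.q : ℝ), zpow_le_zpow_iff_right₀ F.one_lt_q_real] at hx
  rw [hn, show n = 0 by omega, zpow_zero]

def integers (F : NAField K) : Subring K where
  carrier := {x | ‖x‖ ≤ 1}
  mul_mem' {x y} hx hy := by simpa using mul_le_one₀ hx (norm_nonneg _) hy
  one_mem' := by simp
  add_mem' {x y} hx hy := (F.na x y).trans (max_le hx hy)
  zero_mem' := by simp
  neg_mem' {x} hx := by simpa using hx

def residueIdeal (F : NAField K) : Ideal F.integers where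
  carrier := {x | ‖(x : K)‖ ≤ (F.q : ℝ)⁻¹}
  add_mem' {x y} hx hy := (F.na x y).trans (max_le hx hy)
  zero_mem' := by simp
  smul_mem' c x hx := by
    change ‖(c : K) * x‖ ≤ _
    rw [norm_mul]
    exact mul_le_of_le_one_left (norm_nonneg _) c.2 |>.trans hx

lemma mk_residueIdeal_eq_iff (x y : F.integers) :
    Ideal.Quotient.mk F.residueIdeal x = Ideal.Quotient.mk F.residueIdeal y ↔
      ‖(x : K) - y‖ ≤ (F.q : ℝ)⁻¹ :=
  Ideal.Quotient.eq

instance residueIdeal_isPrime : F.residueIdeal.IsPrime := by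
  have hq : ¬ (1 : ℝ) ≤ (F.q : ℝ)⁻¹ := not_le.2 (inv_lt_one_of_one_lt₀ F.one_lt_q_real)
  refine ⟨fun h => hq (by simpa [residueIdeal] using (Ideal.eq_top_iff_one _).mp h),
    fun {x y} hxy => ?_⟩
  by_contra! h
  have hx := F.norm_eq_one_of_inv_q_lt_norm x.2 (not_le.1 h.1)
  have hy := F.norm_eq_one_of_inv_q_lt_norm y.2 (not_le.1 h.2)
  exact hq (by simpa [residueIdeal, norm_mul, hx, hy] using hxy)

lemma bijective_mk_reps :
    Function.Bijective fun s : F.reps =>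
      Ideal.Quotient.mk F.residueIdeal ⟨s, F.norm_reps s s.2⟩ := by
  refine ⟨fun s t hst => ?_, fun z => ?_⟩
  · by_contra hne
    exact (F.reps_sep s s.2 t t.2 (Subtype.coe_ne_coe.2 hne)).not_ge
      ((F.mk_residueIdeal_eq_iff _ _).1 hst)
  · obtain ⟨x, rfl⟩ := Ideal.Quotient.mk_surjective z
    obtain ⟨s, hs, hxs⟩ := F.reps_cover x x.2
    exact ⟨⟨s, hs⟩, (F.mk_residueIdeal_eq_iff _ _).2 (by rwa [norm_sub_rev])⟩

/-- Fermat's little theorem in the residue field, which has `q` elements. -/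
lemma norm_pow_q_sub_self_le {x : K} (hx : ‖x‖ ≤ 1) : ‖x ^ F.q - x‖ ≤ (F.q : ℝ)⁻¹ := by
  let e := Equiv.ofBijective _ F.bijective_mk_reps
  let : Fintype (F.integers ⧸ F.residueIdeal) := Fintype.ofEquiv _ e
  let : Field (F.integers ⧸ F.residueIdeal) := Fintype.fieldOfDomain _
  have hcard : Fintype.card (F.integers ⧸ F.residueIdeal) = F.q := by
    rw [← Fintype.card_congr e, Fintype.card_coe, F.card_reps]
  have := FiniteField.pow_card (Ideal.Quotient.mk F.residueIdeal ⟨x, hx⟩)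
  rw [hcard, ← map_pow, mk_residueIdeal_eq_iff] at this
  exact this

variable (a b : K)

lemma leftInverse_Tinv_Tmap (ha : a ≠ 0) : Function.LeftInverse (F.Tinv a b) (F.Tmap a b) := by
  intro p
  ext
  · rfl
  · simp only [Tinv, Tmap]
    field_simp
    ring

lemma leftInverse_Tmap_Tinv (ha : a ≠ 0) : Function.LeftInverse (F.Tmap a b) (F.Tinv a b) := by
  intro p
  ext
  · simp only [Tinv, Tmap]
    field_simp
    ring
  · rfl

lemma continuous_Tmap : Continuous (F.Tmap a b) := by
  unfold Tmap
  fun_prop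

lemma continuous_iterZ (k : ℤ) : Continuous (F.iterZ a b k) := by
  unfold iterZ
  split_ifs
  · exact (F.continuous_Tmap a b).iterate _
  · exact Continuous.iterate (by unfold Tinv; fun_prop) _

lemma norm_mul_pow_q_sub_sub_le (hb : ‖b‖ ≤ F.q) {x y : K} (hx : ‖x‖ ≤ 1) (hy : ‖y‖ ≤ 1) :
    ‖b * (x ^ F.q - x) - b * (y ^ F.q - y)‖ ≤ F.q * ‖x - y‖ := by
  rw [← mul_sub, norm_mul, sub_sub_sub_comm]
  exact mul_le_mul hb ((F.na.norm_sub_le_max _ _).trans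
    (max_le (F.na.norm_pow_sub_pow_le hx hy _) le_rfl)) (norm_nonneg _) F.q_pos.le

lemma mapsTo_Tmap_unitPoly (ha : ‖a‖ ≤ 1) (hb : ‖b‖ ≤ F.q) :
    Set.MapsTo (F.Tmap a b) (unitPoly K) (unitPoly K) := by
  rintro ⟨x, y⟩ ⟨hx, hy⟩
  refine ⟨(F.na _ _).trans (max_le ?_ ?_), hx⟩
  · simpa [norm_mul] using mul_le_one₀ ha (norm_nonneg _) hy
  · change ‖b * (x ^ F.q - x)‖ ≤ 1
    rw [norm_mul]
    calc ‖b‖ * ‖x ^ F.q - x‖ ≤ F.q * (F.q : ℝ)⁻¹ :=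
          mul_le_mul hb (F.norm_pow_q_sub_self_le hx) (norm_nonneg _) F.q_pos.le
      _ = 1 := mul_inv_cancel₀ F.q_pos.ne'

lemma iterZ_add_one (ha : a ≠ 0) (k : ℤ) (p : K × K) :
    F.iterZ a b (k + 1) p = F.Tmap a b (F.iterZ a b k p) := by
  unfold iterZ
  rcases le_or_gt 0 k with hk | hk
  · rw [if_pos hk, if_pos (by omega), show (k + 1).toNat = k.toNat + 1 by omega,
      Function.iterate_succ_apply']
  obtain rfl | hk' := eq_or_lt_of_le (show k ≤ -1 by omega)
  · simp [F.leftInverse_Tmap_Tinv a b ha p]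
  · rw [if_neg hk.not_ge, if_neg (by omega), show (-k).toNat = (-(k + 1)).toNat + 1 by omega,
      Function.iterate_succ_apply', F.leftInverse_Tmap_Tinv a b ha]

def orbit (F : NAField K) (a b : K) (p : K × K) (k : ℤ) : K := (F.iterZ a b k p).1

lemma orbit_zero (p : K × K) : F.orbit a b p 0 = p.1 := by
  simp [orbit, iterZ]

lemma orbit_neg_one (p : K × K) : F.orbit a b p (-1) = p.2 := by
  simp [orbit, iterZ, Tinv]

lemma orbit_add_one (ha : a ≠ 0) (p : K × K) (k : ℤ) :
    F.orbit a b p (k + 1) =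
      a * F.orbit a b p (k - 1) + b * (F.orbit a b p k ^ F.q - F.orbit a b p k) := by
  have hk := F.iterZ_add_one a b ha (k - 1) p
  rw [sub_add_cancel] at hk
  simp only [orbit, F.iterZ_add_one a b ha k p, Tmap, hk]

lemma iterZ_mem_unitPoly (ha : ‖a‖ ≤ 1) (hb : ‖b‖ ≤ F.q) (ha₀ : a ≠ 0) {p : K × K}
    (hp : p ∈ F.Attractor a b) (k : ℤ) : F.iterZ a b k p ∈ unitPoly K := by
  have hmem : ∀ n, 1 ≤ n → p ∈ (F.Tmap a b)^[n] '' unitPoly K := by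
    simpa [Attractor] using hp
  have hT := F.mapsTo_Tmap_unitPoly a b ha hb
  unfold iterZ
  split_ifs with hk
  · obtain ⟨z, hz, rfl⟩ := hmem 1 le_rfl
    rw [← Function.iterate_add_apply]
    exact hT.iterate _ hz
  · obtain ⟨z, hz, rfl⟩ := hmem (-k).toNat (by omega)
    rwa [(F.leftInverse_Tinv_Tmap a b ha₀).iterate _ z]

lemma norm_orbit_sub_orbit_add_one_le (ha : ‖a‖ ≤ 1) (hb : ‖b‖ ≤ F.q) (ha₀ : a ≠ 0)
    {p p' : K × K} (hp : p ∈ F.Attractor a b) (hp' : p' ∈ F.Attractor a b) (k : ℤ) :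
    ‖F.orbit a b p (k + 1) - F.orbit a b p' (k + 1)‖ ≤
      F.q * max ‖F.orbit a b p (k - 1) - F.orbit a b p' (k - 1)‖
        ‖F.orbit a b p k - F.orbit a b p' k‖ := by
  rw [F.orbit_add_one a b ha₀, F.orbit_add_one a b ha₀, add_sub_add_comm, ← mul_sub]
  refine (F.na _ _).trans (max_le ?_ ?_)
  · simp only [norm_mul]
    exact mul_le_mul (ha.trans F.one_lt_q_real.le) (le_max_left _ _) (norm_nonneg _) F.q_pos.le
  · exact (F.norm_mul_pow_q_sub_sub_le b hb (F.iterZ_mem_unitPoly a b ha hb ha₀ hp k).1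
      (F.iterZ_mem_unitPoly a b ha hb ha₀ hp' k).1).trans
      (mul_le_mul_of_nonneg_left (le_max_right _ _) F.q_pos.le)

lemma norm_orbit_sub_orbit_sub_one_le (ha : ‖a‖ ≤ 1) (hb : ‖b‖ ≤ F.q) (ha₀ : a ≠ 0)
    {p p' : K × K} (hp : p ∈ F.Attractor a b) (hp' : p' ∈ F.Attractor a b) (k : ℤ) :
    ‖F.orbit a b p (k - 1) - F.orbit a b p' (k - 1)‖ ≤
      F.q * ‖a‖⁻¹ * max ‖F.orbit a b p k - F.orbit a b p' k‖
        ‖F.orbit a b p (k + 1) - F.orbit a b p' (k + 1)‖ := by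
  have hrec : a * (F.orbit a b p (k - 1) - F.orbit a b p' (k - 1)) =
      (F.orbit a b p (k + 1) - F.orbit a b p' (k + 1)) -
        (b * (F.orbit a b p k ^ F.q - F.orbit a b p k) -
          b * (F.orbit a b p' k ^ F.q - F.orbit a b p' k)) := by
    rw [F.orbit_add_one a b ha₀, F.orbit_add_one a b ha₀]
    ring
  rw [mul_comm (F.q : ℝ), mul_assoc, le_inv_mul_iff₀ (norm_pos_iff.2 ha₀), ← norm_mul, hrec]
  refine (F.na.norm_sub_le_max _ _).trans (max_le ?_ ?_)
  · exact (le_max_right _ _).trans (le_mul_of_one_le_left (by positivity) F.one_lt_q_real.le)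
  · exact (F.norm_mul_pow_q_sub_sub_le b hb (F.iterZ_mem_unitPoly a b ha hb ha₀ hp k).1
      (F.iterZ_mem_unitPoly a b ha hb ha₀ hp' k).1).trans
      (mul_le_mul_of_nonneg_left (le_max_left _ _) F.q_pos.le)

lemma dist_eq_max_norm_orbit_sub (p p' : K × K) :
    dist p p' = max ‖F.orbit a b p 0 - F.orbit a b p' 0‖
      ‖F.orbit a b p (-1) - F.orbit a b p' (-1)‖ := by
  rw [Prod.dist_eq, dist_eq_norm, dist_eq_norm, orbit_zero, orbit_zero, orbit_neg_one,
    orbit_neg_one]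

lemma norm_orbit_sub_le_pow_mul_dist (ha : ‖a‖ ≤ 1) (hb : ‖b‖ ≤ F.q) (ha₀ : a ≠ 0)
    {p p' : K × K} (hp : p ∈ F.Attractor a b) (hp' : p' ∈ F.Attractor a b) (n : ℕ) :
    ‖F.orbit a b p n - F.orbit a b p' n‖ ≤ (F.q : ℝ) ^ n * dist p p' := by
  rw [F.dist_eq_max_norm_orbit_sub a b]
  exact (le_max_left _ _).trans (max_le_pow_mul_of_le_mul_max
    (u := fun k => ‖F.orbit a b p k - F.orbit a b p' k‖) F.one_lt_q_real.le
    (fun _ => norm_nonneg _) (F.norm_orbit_sub_orbit_add_one_le a b ha hb ha₀ hp hp') n)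

lemma norm_orbit_neg_sub_le_pow_mul_dist (ha : ‖a‖ ≤ 1) (hb : ‖b‖ ≤ F.q) (ha₀ : a ≠ 0)
    {p p' : K × K} (hp : p ∈ F.Attractor a b) (hp' : p' ∈ F.Attractor a b) (n : ℕ) :
    ‖F.orbit a b p (-n) - F.orbit a b p' (-n)‖ ≤ (F.q * ‖a‖⁻¹) ^ n * dist p p' := by
  have hc : 1 ≤ (F.q : ℝ) * ‖a‖⁻¹ :=
    one_le_mul_of_one_le_of_one_le F.one_lt_q_real.le (one_le_inv₀ (norm_pos_iff.2 ha₀) |>.2 ha)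
  -- the forward growth bound, applied to the time-reversed sequence of orbit distances
  have := max_le_pow_mul_of_le_mul_max
    (u := fun j => ‖F.orbit a b p (-j - 1) - F.orbit a b p' (-j - 1)‖) hc
    (fun _ => norm_nonneg _) (fun j => by
      have h := F.norm_orbit_sub_orbit_sub_one_le a b ha hb ha₀ hp hp' (-j - 1)
      rwa [show -j - 1 - 1 = -(j + 1) - 1 by ring, show -j - 1 + 1 = -(j - 1) - 1 by ring,
        max_comm] at h) n
  simp only [neg_neg, sub_self, show ∀ m : ℤ, -(m - 1) - 1 = -m by intro m; ring] at this
  rw [F.dist_eq_max_norm_orbit_sub a b, max_comm]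
  exact (le_max_right _ _).trans this

lemma exists_norm_eq_inv_pow (ha₀ : a ≠ 0) (ha : ‖a‖ ≤ 1) :
    ∃ v : ℕ, ‖a‖ = ((F.q : ℝ) ^ v)⁻¹ := by
  obtain ⟨n, hn⟩ := F.valGroup a ha₀
  rw [hn, ← zpow_zero (F.q : ℝ), zpow_le_zpow_iff_right₀ F.one_lt_q_real] at ha
  refine ⟨(-n).toNat, ?_⟩
  rw [hn, ← zpow_natCast, ← zpow_neg, Int.toNat_of_nonneg (by omega), neg_neg]

lemma norm_orbit_sub_le_of_mem_Icc (ha : ‖a‖ ≤ 1) (hb : ‖b‖ ≤ F.q) (ha₀ : a ≠ 0) {v : ℕ}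
    (hv : ‖a‖ = ((F.q : ℝ) ^ v)⁻¹) {p p' : K × K} (hp : p ∈ F.Attractor a b)
    (hp' : p' ∈ F.Attractor a b) {m : ℕ} {k : ℤ} (hk : k ∈ Set.Icc (-(m / (v + 1) : ℕ) : ℤ) m) :
    ‖F.orbit a b p k - F.orbit a b p' k‖ ≤ (F.q : ℝ) ^ m * dist p p' := by
  obtain ⟨j, rfl | rfl⟩ := Int.eq_nat_or_neg k
  · refine (F.norm_orbit_sub_le_pow_mul_dist a b ha hb ha₀ hp hp' j).trans ?_
    gcongr
    · exact F.one_lt_q_real.le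
    · exact_mod_cast hk.2
  · refine (F.norm_orbit_neg_sub_le_pow_mul_dist a b ha hb ha₀ hp hp' j).trans ?_
    rw [hv, inv_inv, ← pow_succ', ← pow_mul]
    gcongr
    · exact F.one_lt_q_real.le
    · rw [mul_comm]
      exact (Nat.le_div_iff_mul_le v.succ_pos).1 (by exact_mod_cast neg_le_neg_iff.1 hk.1)

lemma properSpace (F : NAField K) : ProperSpace K := by
  obtain ⟨ϖ, hϖ⟩ := F.exists_unif
  let _ : NontriviallyNormedField K :=
    { ‹NormedField K› with
      non_trivial := ⟨ϖ⁻¹, by rw [norm_inv, hϖ, inv_inv]; exact F.one_lt_q_real⟩ }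
  have := F.locCompact
  exact ProperSpace.of_nontriviallyNormedField_of_weaklyLocallyCompactSpace K

lemma isCompact_unitPoly (F : NAField K) : IsCompact (unitPoly K) := by
  have := F.properSpace
  have h : unitPoly K = Metric.closedBall (0 : K) 1 ×ˢ Metric.closedBall (0 : K) 1 := by
    ext; simp [unitPoly]
  exact h ▸ (isCompact_closedBall _ _).prod (isCompact_closedBall _ _)

lemma isClosed_cyl (s : ℤ → K) (M : ℕ) : IsClosed (F.Cyl a b s M) := by
  have hA : IsClosed (F.Attractor a b) := isClosed_biInter fun n _ =>
    (F.isCompact_unitPoly.image ((F.continuous_Tmap a b).iterate n)).isClosed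
  have hk : ∀ k : ℤ, IsClosed {p | |k| ≤ M → ‖(F.iterZ a b k p).1 - s k‖ ≤ (F.q : ℝ)⁻¹} := by
    intro k
    by_cases hkM : |k| ≤ M
    · simpa [hkM] using isClosed_le
        ((F.continuous_iterZ a b k).fst.sub continuous_const).norm continuous_const
    · simp [hkM]
  simpa [Cyl, Set.ofPred_and, Set.ofPred_forall] using hA.inter (isClosed_iInter hk)

lemma exists_itinerary (ha : ‖a‖ ≤ 1) (hb : ‖b‖ ≤ F.q) (ha₀ : a ≠ 0) {p : K × K}
    (hp : p ∈ F.Attractor a b) :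
    ∃ s : ℤ → K, (∀ k, s k ∈ F.reps) ∧ ∀ k, ‖F.orbit a b p k - s k‖ ≤ (F.q : ℝ)⁻¹ := by
  choose s hs hps using fun k => F.reps_cover _ (F.iterZ_mem_unitPoly a b ha hb ha₀ hp k).1
  exact ⟨s, hs, hps⟩

lemma disjoint_cyl {s t : ℤ → K} {M : ℕ} {k : ℤ} (hk : |k| ≤ M) (hs : s k ∈ F.reps)
    (ht : t k ∈ F.reps) (hst : s k ≠ t k) : Disjoint (F.Cyl a b s M) (F.Cyl a b t M) := by
  rw [Set.disjoint_left]
  rintro p ⟨-, hps⟩ ⟨-, hpt⟩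
  refine (F.reps_sep _ hs _ ht hst).not_ge ?_
  calc ‖s k - t k‖ = ‖((F.iterZ a b k p).1 - t k) - ((F.iterZ a b k p).1 - s k)‖ := by
        ring_nf
    _ ≤ (F.q : ℝ)⁻¹ := (F.na.norm_sub_le_max _ _).trans (max_le (hpt k hk) (hps k hk))

def cylIcc (F : NAField K) (a b : K) (σ : ℤ → K) (m n : ℤ) : Set (K × K) :=
  {p | p ∈ F.Attractor a b ∧ ∀ k ∈ Set.Icc m n, ‖F.orbit a b p k - σ k‖ ≤ (F.q : ℝ)⁻¹}

section Measure

variable [MeasurableSpace K] (μ : Measure (K × K))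

lemma measure_cylIcc_le (ha : ‖a‖ ≤ 1) (hb : ‖b‖ ≤ F.q) (ha₀ : a ≠ 0)
    (hcyl : ∀ s : ℤ → K, (∀ k, s k ∈ F.reps) → ∀ M : ℕ,
      μ (F.Cyl a b s M) = ((F.q : ℝ≥0∞))⁻¹ ^ (2 * M + 1))
    {σ : ℤ → K} (hσ : ∀ k, σ k ∈ F.reps) {m n : ℕ} (hmn : m ≤ n) :
    μ (F.cylIcc a b σ (-m) n) ≤ (F.q : ℝ≥0∞)⁻¹ ^ (n + m + 1) := by
  -- cover by the cylinders of length `2 n + 1` agreeing with `σ` at the times `-m, …, n`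
  let J := Finset.Ico (-(n : ℤ)) (-m)
  let ext : (J → F.reps) → ℤ → K := fun f k => if h : k ∈ J then f ⟨k, h⟩ else σ k
  have hext : ∀ f k, ext f k ∈ F.reps := by
    intro f k
    unfold ext
    split_ifs
    exacts [(f _).2, hσ k]
  have hcover : F.cylIcc a b σ (-m) n ⊆ ⋃ f, F.Cyl a b (ext f) n := by
    rintro p ⟨hpA, hpσ⟩
    obtain ⟨s, hs, hps⟩ := F.exists_itinerary a b ha hb ha₀ hpA
    refine Set.mem_iUnion.2 ⟨fun j => ⟨s j, hs j⟩, hpA, fun k hk => ?_⟩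
    rw [abs_le] at hk
    by_cases hkJ : k ∈ J
    · simp only [ext, dif_pos hkJ]
      exact hps k
    · simp only [ext, dif_neg hkJ]
      exact hpσ k ⟨by simp [J] at hkJ; omega, hk.2⟩
  have hcard : Fintype.card (J → F.reps) = F.q ^ (n - m) := by
    rw [Fintype.card_fun, Fintype.card_coe, F.card_reps, Fintype.card_coe, Int.card_Ico]
    congr 1
    omega
  have hq : (F.q : ℝ≥0∞) * (F.q : ℝ≥0∞)⁻¹ = 1 :=
    ENNReal.mul_inv_cancel (by simpa using F.q_pos.ne') (ENNReal.natCast_ne_top _)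
  calc μ (F.cylIcc a b σ (-m) n) ≤ ∑' f, μ (F.Cyl a b (ext f) n) :=
        (measure_mono hcover).trans (measure_iUnion_le _)
    _ = (F.q : ℝ≥0∞) ^ (n - m) * (F.q : ℝ≥0∞)⁻¹ ^ ((n - m) + (n + m + 1)) := by
        rw [show n - m + (n + m + 1) = 2 * n + 1 by omega]
        simp [hcyl _ (hext _), hcard]
    _ = (F.q : ℝ≥0∞)⁻¹ ^ (n + m + 1) := by
        rw [pow_add, ← mul_assoc, ← mul_pow, hq, one_pow, one_mul]

variable [BorelSpace K]

lemma measure_compl_attractor (hprob : μ Set.univ = 1)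
    (hcyl : ∀ s : ℤ → K, (∀ k, s k ∈ F.reps) → ∀ M : ℕ,
      μ (F.Cyl a b s M) = ((F.q : ℝ≥0∞))⁻¹ ^ (2 * M + 1)) :
    μ (F.Attractor a b)ᶜ = 0 := by
  have : IsProbabilityMeasure μ := ⟨hprob⟩
  have := F.properSpace
  let C : F.reps → Set (K × K) := fun s => F.Cyl a b (fun _ => s) 0
  have hC : ∀ s, MeasurableSet (C s) := fun s => (F.isClosed_cyl a b _ 0).measurableSet
  have hU : μ (⋃ s, C s) = 1 := by
    rw [measure_iUnion (fun s t hst => F.disjoint_cyl a b (k := 0) le_rfl s.2 t.2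
      (Subtype.coe_ne_coe.2 hst)) hC]
    simp only [hcyl _ (fun _ => Subtype.prop _), tsum_fintype, Finset.sum_const,
      Finset.card_univ, Fintype.card_coe, F.card_reps, nsmul_eq_mul]
    simpa using ENNReal.mul_inv_cancel (by simpa using F.q_pos.ne') (ENNReal.natCast_ne_top _)
  exact measure_mono_null (Set.compl_subset_compl.2 (Set.iUnion_subset fun s p hp => hp.1))
    ((prob_compl_eq_zero_iff (MeasurableSet.iUnion hC)).2 hU)

lemma measure_le_of_ediam_le (ha : ‖a‖ ≤ 1) (hb : ‖b‖ ≤ F.q) (ha₀ : a ≠ 0) {v : ℕ}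
    (hv : ‖a‖ = ((F.q : ℝ) ^ v)⁻¹) (hprob : μ Set.univ = 1)
    (hcyl : ∀ s : ℤ → K, (∀ k, s k ∈ F.reps) → ∀ M : ℕ,
      μ (F.Cyl a b s M) = ((F.q : ℝ≥0∞))⁻¹ ^ (2 * M + 1))
    {A : Set (K × K)} {m : ℕ} (hA : Metric.ediam A ≤ (F.q : ℝ≥0∞)⁻¹ ^ (m + 1)) :
    μ A ≤ (F.q : ℝ≥0∞)⁻¹ ^ (m + m / (v + 1) + 1) := by
  rw [← measure_inter_conull (F.measure_compl_attractor a b μ hprob hcyl)]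
  obtain h | ⟨p₀, hp₀A, hp₀⟩ := (A ∩ F.Attractor a b).eq_empty_or_nonempty
  · simp [h]
  obtain ⟨σ, hσ, hp₀σ⟩ := F.exists_itinerary a b ha hb ha₀ hp₀
  refine (measure_mono ?_).trans
    (F.measure_cylIcc_le a b μ ha hb ha₀ hcyl hσ (Nat.div_le_self m (v + 1)))
  rintro p ⟨hpA, hp⟩
  refine ⟨hp, fun k hk => ?_⟩
  have hdist : dist p p₀ ≤ (F.q : ℝ)⁻¹ ^ (m + 1) := by
    rw [dist_edist]
    refine ENNReal.toReal_le_of_le_ofReal (by positivity) ?_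
    rw [ENNReal.ofReal_pow (by positivity), ENNReal.ofReal_inv_of_pos F.q_pos,
      ENNReal.ofReal_natCast]
    exact (Metric.edist_le_ediam_of_mem hpA hp₀A).trans hA
  have hnear : ‖F.orbit a b p k - F.orbit a b p₀ k‖ ≤ (F.q : ℝ)⁻¹ :=
    calc _ ≤ (F.q : ℝ) ^ m * dist p p₀ :=
          F.norm_orbit_sub_le_of_mem_Icc a b ha hb ha₀ hv hp hp₀ (by exact_mod_cast hk)
      _ ≤ (F.q : ℝ) ^ m * (F.q : ℝ)⁻¹ ^ (m + 1) := by gcongr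
      _ = (F.q : ℝ)⁻¹ := by rw [pow_succ, ← mul_assoc, ← mul_pow, mul_inv_cancel₀ F.q_pos.ne',
          one_pow, one_mul]
  calc ‖F.orbit a b p k - σ k‖
      = ‖(F.orbit a b p k - F.orbit a b p₀ k) + (F.orbit a b p₀ k - σ k)‖ := by ring_nf
    _ ≤ (F.q : ℝ)⁻¹ := (F.na _ _).trans (max_le hnear (hp₀σ k))

end Measure

end NAField

theorem stmt16 [MeasurableSpace K] [BorelSpace K]
    (F : NAField K) (a b : K) (ha0 : a ≠ 0) (ha : ‖a‖ < 1)
    (hb : ‖b‖ = (F.q : ℝ)) (μ : Measure (K × K))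
    (hprob : μ Set.univ = 1)
    (hcyl : ∀ s : ℤ → K, (∀ k, s k ∈ F.reps) → ∀ M : ℕ,
      μ (F.Cyl a b s M) = ((F.q : ENNReal))⁻¹ ^ (2 * M + 1)) :
    ∃ C : ENNReal, 0 < C ∧ C ≠ ⊤ ∧
      ∀ A : Set (K × K), MeasurableSet A →
        μ A ≤ C * EMetric.diam A ^ (1 + 1 / (1 + Real.logb F.q ‖a‖⁻¹)) := by
  obtain ⟨v, hv⟩ := F.exists_norm_eq_inv_pow a ha0 ha.le
  have hα : 1 + Real.logb F.q ‖a‖⁻¹ = v + 1 := by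
    rw [hv, inv_inv, Real.logb_pow, Real.logb_self_eq_one F.one_lt_q_real, mul_one, add_comm]
  have hq : (F.q : ℝ≥0∞) ≠ 0 := by simpa using F.q_pos.ne'
  rw [hα]
  refine ⟨F.q * F.q ^ (1 + 1 / ((v : ℝ) + 1)), by positivity, by finiteness, fun A _ => ?_⟩
  have hε₀ : (F.q : ℝ≥0∞)⁻¹ ≠ 0 := ENNReal.inv_ne_zero.2 (ENNReal.natCast_ne_top _)
  have hε₁ : (F.q : ℝ≥0∞)⁻¹ < 1 := ENNReal.inv_lt_one.2 (by exact_mod_cast F.one_lt_q)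
  have hμA : μ A ≤ F.q :=
    (measure_mono (Set.subset_univ A)).trans (hprob ▸ by exact_mod_cast F.one_lt_q.le)
  have hA : ∀ m : ℕ, EMetric.diam A ≤ (F.q : ℝ≥0∞)⁻¹ ^ (m + 1) →
      μ A ≤ F.q * ((F.q : ℝ≥0∞)⁻¹ ^ (m + 1)) ^ (1 + 1 / ((v : ℝ) + 1)) := fun m hm =>
    (F.measure_le_of_ediam_le a b μ ha.le hb.le ha0 hv hprob hcyl hm).trans
      (by simpa using ENNReal.pow_le_inv_mul_rpow hε₀ hε₁.le m v)
  simpa using ENNReal.le_mul_inv_rpow_mul_rpow_of_forall_le_pow hε₀ hε₁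
    (ENNReal.natCast_ne_top _) (by positivity) hμA hA
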